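/- arXiv:1607.00257 — 3 statements merged into one kernel-verified Lean document; each statement's English description precedes it below -/
import Mathlib

section
/- Let G be a finite group, p a prime, and M_i a maximal cyclic subgroup of G that is a p-group, with chain C_{i1} ⊊ ··· ⊊ C_{is_i} = M_i of intersections of M_i with the maximal cyclic p-subgroups of G. Let c ∈ G be such that every maximal cyclic subgroup of G containing ⟨c⟩ is a p-group. If C_{i(u−1)} ⊊ ⟨c⟩ ⊆ C_{iu} (with C_{i0} = ∅), then the closed neighborhood of c in the power graph of G equals the closed neighborhood of any generator c_{iu} of C_{iu}. -/
/-- Closed neighborhood of a vertex. -/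
def SimpleGraph.closedNbhd {V : Type*} (Γ : SimpleGraph V) (x : V) : Set V :=
  insert x (Γ.neighborSet x)

/-- `z` strongly resolves `x` and `y`: some shortest path from `z` to `x` contains `y`,
or some shortest path from `z` to `y` contains `x`. -/
def SimpleGraph.StronglyResolves {V : Type*} (Γ : SimpleGraph V) (z x y : V) : Prop :=
  Γ.dist z y + Γ.dist y x = Γ.dist z x ∨ Γ.dist z x + Γ.dist x y = Γ.dist z y

def SimpleGraph.IsStrongResolvingSet {V : Type*} (Γ : SimpleGraph V) (S : Set V) : Prop :=
  ∀ x y : V, x ≠ y → ∃ z ∈ S, Γ.StronglyResolves z x y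

/-- Strong metric dimension. -/
noncomputable def SimpleGraph.sdim {V : Type*} (Γ : SimpleGraph V) : ℕ :=
  sInf {k | ∃ S : Set V, Γ.IsStrongResolvingSet S ∧ S.ncard = k}

/-- Equivalence: equal closed neighborhoods. -/
def SimpleGraph.nbhdSetoid {V : Type*} (Γ : SimpleGraph V) : Setoid V :=
  ⟨fun x y => Γ.closedNbhd x = Γ.closedNbhd y,
   ⟨fun _ => rfl, Eq.symm, Eq.trans⟩⟩

/-- The reduced graph of `Γ`. -/
def SimpleGraph.reduced {V : Type*} (Γ : SimpleGraph V) :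
    SimpleGraph (Quotient Γ.nbhdSetoid) where
  Adj a b := a ≠ b ∧ ∃ x y : V,
    Quotient.mk Γ.nbhdSetoid x = a ∧ Quotient.mk Γ.nbhdSetoid y = b ∧ Γ.Adj x y
  symm := ⟨by
    rintro a b ⟨h, x, y, hx, hy, hxy⟩
    exact ⟨h.symm, y, x, hy, hx, hxy.symm⟩⟩
  loopless := ⟨by rintro a ⟨h, -⟩; exact h rfl⟩

/-- The power graph of a group. -/
def powerGraph (G : Type*) [Group G] : SimpleGraph G where
  Adj x y := x ≠ y ∧ (x ∈ Subgroup.zpowers y ∨ y ∈ Subgroup.zpowers x)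
  symm := ⟨by rintro x y ⟨h, h2⟩; exact ⟨h.symm, h2.symm⟩⟩
  loopless := ⟨by rintro x ⟨h, -⟩; exact h rfl⟩

/-- `σ n`: 1 if `n` is a prime power, otherwise the sum of the exponents in the
prime factorization of `n`. -/
noncomputable def sigmaExp (n : ℕ) : ℕ :=
  if IsPrimePow n then 1 else n.factorization.sum fun _ k => k

/-- A maximal cyclic subgroup. -/
def IsMaxCyclic {G : Type*} [Group G] (M : Subgroup G) : Prop :=
  IsCyclic M ∧ ∀ N : Subgroup G, IsCyclic N → M ≤ N → M = N

/-- The set `𝓜_p` of maximal cyclic subgroups that are `p`-groups. -/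
def maxCycP (p : ℕ) (G : Type*) [Group G] : Set (Subgroup G) :=
  {M | IsMaxCyclic M ∧ IsPGroup p M}

/-- The set of intersections of `M` with members of `𝓜_p`. -/
def inters (p : ℕ) {G : Type*} [Group G] (M : Subgroup G) : Set (Subgroup G) :=
  {C | ∃ N ∈ maxCycP p G, C = M ⊓ N}

/-- `s_i`: the number of distinct intersections. -/
noncomputable def sNum (p : ℕ) {G : Type*} [Group G] (M : Subgroup G) : ℕ :=
  Nat.card (inters p M)

open Classical in
/-- `λ_i`, defined by `p ^ λ_i = max {|M ⊓ N| : N maximal cyclic, not a p-group}`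
if maximal cyclic non-`p`-subgroups exist, and `λ_i = -1` otherwise. -/
noncomputable def lamInt (p : ℕ) {G : Type*} [Group G] (M : Subgroup G) : ℤ :=
  if {N : Subgroup G | IsMaxCyclic N ∧ ¬ IsPGroup p N}.Nonempty then
    (padicValNat p (sSup {k | ∃ N : Subgroup G, IsMaxCyclic N ∧ ¬ IsPGroup p N ∧
        k = Nat.card ↥(M ⊓ N)}) : ℤ)
  else -1

/-- `s_i'`: the least index `u` with `p ^ λ_i < |C_{iu}|` in the chain of intersections;
equivalently one more than the number of intersections of cardinality at most `p ^ λ_i`. -/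
noncomputable def sPrimeNum (p : ℕ) {G : Type*} [Group G] (M : Subgroup G) : ℕ :=
  Nat.card {C | C ∈ inters p M ∧ (Nat.card ↥C : ℚ) ≤ (p : ℚ) ^ (lamInt p M)} + 1

noncomputable def alphaTerm (p : ℕ) {G : Type*} [Group G] (M : Subgroup G) : ℤ :=
  (sNum p M : ℤ) - (sPrimeNum p M : ℤ) + lamInt p M + 2

/-- `α_p = max_i (s_i - s_i' + λ_i + 2)`, with `α_p = 0` when `𝓜_p = ∅`. -/
noncomputable def alphaP (p : ℕ) (G : Type*) [Group G] : ℤ :=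
  sSup (alphaTerm p '' maxCycP p G)

/-- A CP-group: every nonidentity element has prime power order. -/
def IsCPGroup (G : Type*) [Group G] : Prop :=
  ∀ g : G, g ≠ 1 → IsPrimePow (orderOf g)

/-!
In a cyclic `p`-group any two elements are powers of one another, so its subgroups form a chain.
A neighbour `y` of `c` with `c ∈ ⟨y⟩` lies, together with `c`, in some maximal cyclic subgroup `K`,
which is a `p`-group by hypothesis; then `M ⊓ K` is an intersection containing `⟨c⟩`, so it cannot
lie strictly below `C`, and comparability in the chain gives `C ≤ K`. Hence `d` and `y` both lie in
the cyclic `p`-group `K`, so one is a power of the other. All other cases happen inside `M` or follow from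
`⟨c⟩ ≤ ⟨d⟩`.
-/

open Subgroup

theorem IsCyclic.mem_zpowers_of_orderOf_dvd {α : Type*} [Group α] [Finite α] [IsCyclic α]
    {x y : α} (h : orderOf x ∣ orderOf y) : x ∈ zpowers y := by
  classical
  have := Fintype.ofFinite α
  set roots : Finset α := Finset.univ.filter (· ^ orderOf y = 1)
  have hsub : (zpowers y : Set α).toFinset ⊆ roots := fun z hz => by
    simpa [roots] using orderOf_dvd_iff_pow_eq_one.mp
      (orderOf_dvd_of_mem_zpowers (Set.mem_toFinset.mp hz))
  -- A cyclic group has at most `n` solutions of `a ^ n = 1`, and `zpowers y` already supplies them.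
  have hroots : (zpowers y : Set α).toFinset = roots := by
    refine Finset.eq_of_subset_of_card_le hsub ?_
    simp only [Set.toFinset_card, ← Nat.card_eq_fintype_card, SetLike.coe_sort_coe,
      Nat.card_zpowers]
    exact IsCyclic.card_pow_eq_one_le (orderOf_pos y)
  have hx : x ∈ roots := by simpa [roots] using orderOf_dvd_iff_pow_eq_one.mp h
  rwa [← hroots, Set.mem_toFinset] at hx

theorem IsPGroup.mem_zpowers_or_mem_zpowers {p : ℕ} [Fact p.Prime] {α : Type*} [Group α]
    [Finite α] [IsCyclic α] (hα : IsPGroup p α) (x y : α) :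
    x ∈ zpowers y ∨ y ∈ zpowers x := by
  obtain ⟨a, ha⟩ := IsPGroup.iff_orderOf.mp hα x
  obtain ⟨b, hb⟩ := IsPGroup.iff_orderOf.mp hα y
  rcases le_total a b with hab | hba
  · exact .inl (IsCyclic.mem_zpowers_of_orderOf_dvd (by rw [ha, hb]; exact pow_dvd_pow p hab))
  · exact .inr (IsCyclic.mem_zpowers_of_orderOf_dvd (by rw [ha, hb]; exact pow_dvd_pow p hba))

section CyclicPSubgroup

variable {G : Type*} [Group G] [Finite G] {p : ℕ} [Fact p.Prime] {K : Subgroup G} [IsCyclic K]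

theorem Subgroup.mem_zpowers_or_mem_zpowers_of_isPGroup (hK : IsPGroup p K) {x y : G}
    (hx : x ∈ K) (hy : y ∈ K) : x ∈ zpowers y ∨ y ∈ zpowers x := by
  have coe_mem : ∀ u v : K, u ∈ zpowers v → (u : G) ∈ zpowers (v : G) := by
    rintro u v ⟨k, rfl⟩
    exact ⟨k, by simp⟩
  exact (hK.mem_zpowers_or_mem_zpowers ⟨x, hx⟩ ⟨y, hy⟩).imp (coe_mem _ _) (coe_mem _ _)

theorem Subgroup.le_total_of_le_of_isPGroup (hK : IsPGroup p K) {H₁ H₂ : Subgroup G}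
    (h₁ : H₁ ≤ K) (h₂ : H₂ ≤ K) : H₁ ≤ H₂ ∨ H₂ ≤ H₁ := by
  refine or_iff_not_imp_left.mpr fun h b hb => ?_
  obtain ⟨a, ha₁, ha₂⟩ := SetLike.not_le_iff_exists.mp h
  rcases K.mem_zpowers_or_mem_zpowers_of_isPGroup hK (h₁ ha₁) (h₂ hb) with hab | hba
  · exact absurd (zpowers_le.mpr hb hab) ha₂
  · exact zpowers_le.mpr ha₁ hba

end CyclicPSubgroup

theorem exists_isMaxCyclic_le {G : Type*} [Group G] [Finite G] (H : Subgroup G) [IsCyclic H] :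
    ∃ K : Subgroup G, IsMaxCyclic K ∧ H ≤ K := by
  obtain ⟨K, hHK, hK⟩ := Finite.exists_le_maximal (p := fun N : Subgroup G => IsCyclic N) ‹_›
  exact ⟨K, ⟨hK.prop, fun N hN hKN => le_antisymm hKN (hK.2 hN hKN)⟩, hHK⟩

theorem mem_closedNbhd_powerGraph {G : Type*} [Group G] {x z : G} :
    z ∈ (powerGraph G).closedNbhd x ↔ x ∈ zpowers z ∨ z ∈ zpowers x := by
  constructor
  · rintro (rfl | ⟨-, h⟩)
    · exact .inl (mem_zpowers _)
    · exact h
  · intro h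
    by_cases hz : z = x
    · exact .inl hz
    · exact .inr ⟨Ne.symm hz, h⟩

theorem le_of_mem_maxCycP_of_mem {G : Type*} [Group G] [Finite G] {p : ℕ} [Fact p.Prime]
    {M C K : Subgroup G} [IsCyclic M] (hMp : IsPGroup p M) (hCM : C ≤ M) {c : G}
    (hprev : ∀ C' ∈ inters p M, C' < C → C' < zpowers c) (hcM : c ∈ M)
    (hK : K ∈ maxCycP p G) (hcK : c ∈ K) : C ≤ K := by
  have hMK : M ⊓ K ∈ inters p M := ⟨K, hK, rfl⟩
  have hcMK : zpowers c ≤ M ⊓ K := zpowers_le.mpr ⟨hcM, hcK⟩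
  rcases M.le_total_of_le_of_isPGroup hMp inf_le_left hCM with hMKC | hCMK
  · rcases hMKC.eq_or_lt with heq | hlt
    · exact heq ▸ inf_le_right
    · exact absurd ((hprev _ hMK hlt).trans_le hcMK) (lt_irrefl _)
  · exact hCMK.trans inf_le_right

theorem stmt_6 {G : Type*} [Group G] [Finite G] (p : ℕ) (hp : p.Prime)
    (M : Subgroup G) (hM : M ∈ maxCycP p G)
    (c : G) (hc : ∀ N : Subgroup G, IsMaxCyclic N → Subgroup.zpowers c ≤ N → IsPGroup p N)
    (C : Subgroup G) (hCmem : C ∈ inters p M)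
    (hle : Subgroup.zpowers c ≤ C)
    (hprev : ∀ C' ∈ inters p M, C' < C → C' < Subgroup.zpowers c)
    (d : G) (hd : Subgroup.zpowers d = C) :
    (powerGraph G).closedNbhd c = (powerGraph G).closedNbhd d := by
  have := Fact.mk hp
  obtain ⟨⟨hMcyc, -⟩, hMp⟩ := hM
  obtain ⟨N, -, hCN⟩ := hCmem
  have hCM : C ≤ M := hCN ▸ inf_le_left
  subst hd
  have hcd : c ∈ zpowers d := hle (mem_zpowers c)
  have hcM : c ∈ M := hCM hcd
  ext y
  simp only [mem_closedNbhd_powerGraph]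
  constructor
  · rintro (hcy | hyc)
    · obtain ⟨K, hKmax, hyK⟩ := exists_isMaxCyclic_le (zpowers y)
      have hcK : c ∈ K := hyK hcy
      have hK : K ∈ maxCycP p G := ⟨hKmax, hc K hKmax (zpowers_le.mpr hcK)⟩
      have := hKmax.1
      exact K.mem_zpowers_or_mem_zpowers_of_isPGroup hK.2
        (le_of_mem_maxCycP_of_mem hMp hCM hprev hcM hK hcK (mem_zpowers d))
        (hyK (mem_zpowers y))
    · exact .inr (hle hyc)
  · rintro (hdy | hyd)
    · exact .inl (zpowers_le.mpr hdy hcd)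
    · exact M.mem_zpowers_or_mem_zpowers_of_isPGroup hMp hcM (hCM hyd)
end

section
/- For any prime p and n ≥ 1 with p^n > p (i.e., the group is noncyclic, so n ≥ 2), the strong metric dimension of the power graph of the elementary abelian group (Z_p)^n equals p^n − 2. -/
/-! In a group whose nontrivial elements all have prime order, two nontrivial vertices of the
power graph are adjacent exactly when they generate the same cyclic subgroup, while the identity
is adjacent to everything. So the graph has diameter at most two and every nontrivial vertex is
simplicial; in such a graph no third vertex lies on a geodesic between two simplicial vertices,
so a strong resolving set misses at most one nontrivial element. Conversely, if the group is not
cyclic, any element outside `⟨g⟩` strongly resolves `1` and `g` through the geodesic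
`z – 1 – g`, so removing `1` and `g` from the vertex set leaves a strong resolving set. -/

theorem Set.ncard_le_ncard_add_one_of_pairwise {α : Type*} {S T : Set α} (hS : S.Finite)
    (h : T.Pairwise fun x y => x ∈ S ∨ y ∈ S) : T.ncard ≤ S.ncard + 1 := by
  have hsub : (T \ S).Subsingleton := by
    rintro x ⟨hxT, hxS⟩ y ⟨hyT, hyS⟩
    by_contra hxy
    exact (h hxT hyT hxy).elim hxS hyS
  calc T.ncard ≤ (T \ S).ncard + S.ncard := Set.ncard_le_ncard_sdiff_add_ncard T S hS
    _ ≤ 1 + S.ncard := by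
      gcongr
      exact (Set.ncard_le_one hsub.finite).2 fun a ha b hb => hsub ha hb
    _ = S.ncard + 1 := add_comm _ _

namespace SimpleGraph

variable {V : Type*} {Γ : SimpleGraph V}

theorem StronglyResolves.symm {z x y : V} (h : Γ.StronglyResolves z x y) :
    Γ.StronglyResolves z y x :=
  Or.symm h

theorem stronglyResolves_self_left (x y : V) : Γ.StronglyResolves x x y :=
  Or.inr (by simp)

theorem isStrongResolvingSet_univ : Γ.IsStrongResolvingSet Set.univ :=
  fun x y _ => ⟨x, trivial, stronglyResolves_self_left x y⟩

theorem sdim_le_ncard {S : Set V} (hS : Γ.IsStrongResolvingSet S) : Γ.sdim ≤ S.ncard :=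
  Nat.sInf_le ⟨S, hS, rfl⟩

theorem le_sdim {m : ℕ} (h : ∀ S, Γ.IsStrongResolvingSet S → m ≤ S.ncard) :
    m ≤ Γ.sdim :=
  le_csInf ⟨_, _, isStrongResolvingSet_univ, rfl⟩ (by rintro k ⟨S, hS, rfl⟩; exact h S hS)

theorem isStrongResolvingSet_compl_pair {a b z : V} (hza : z ≠ a) (hzb : z ≠ b)
    (hz : Γ.StronglyResolves z a b) : Γ.IsStrongResolvingSet {a, b}ᶜ := by
  intro x y hxy
  by_cases hx : x ∈ ({a, b} : Set V)ᶜ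
  · exact ⟨x, hx, stronglyResolves_self_left x y⟩
  by_cases hy : y ∈ ({a, b} : Set V)ᶜ
  · exact ⟨y, hy, (stronglyResolves_self_left y x).symm⟩
  have hzS : z ∈ ({a, b} : Set V)ᶜ := by simp [hza, hzb]
  simp only [Set.mem_compl_iff, not_not, Set.mem_insert_iff, Set.mem_singleton_iff] at hx hy
  rcases hx with rfl | rfl <;> rcases hy with rfl | rfl
  exacts [absurd rfl hxy, ⟨z, hzS, hz⟩, ⟨z, hzS, hz.symm⟩, absurd rfl hxy]

theorem stronglyResolves_of_adj_of_adj {z c x : V} (hzc : Γ.Adj z c) (hcx : Γ.Adj c x)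
    (hzx : z ≠ x) (hnadj : ¬Γ.Adj z x) : Γ.StronglyResolves z c x := by
  right
  have hzx2 : Γ.dist z x = 2 := by
    have h2 : Γ.edist z x = 2 := edist_eq_two_iff.2 ⟨hzx, hnadj, c, hzc, hcx.symm⟩
    simp [dist, h2]
  rw [dist_eq_one_iff_adj.2 hzc, dist_eq_one_iff_adj.2 hcx, hzx2]

theorem connected_of_forall_adj (c : V) (hc : ∀ x, x ≠ c → Γ.Adj x c) : Γ.Connected := by
  have hreach : ∀ x, Γ.Reachable x c := fun x => by
    by_cases hx : x = c
    · rw [hx]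
    · exact (hc x hx).reachable
  exact (connected_iff _).2 ⟨fun x y => (hreach x).trans (hreach y).symm, ⟨c⟩⟩

theorem dist_le_two_of_forall_adj (c : V) (hc : ∀ x, x ≠ c → Γ.Adj x c) (x y : V) :
    Γ.dist x y ≤ 2 := by
  by_cases hx : x = c
  · subst hx
    by_cases hy : y = x
    · simp [hy]
    · simp [dist_eq_one_iff_adj.2 (hc y hy).symm]
  by_cases hy : y = c
  · simp [hy, dist_eq_one_iff_adj.2 (hc x hx)]
  exact (Γ.dist_le (.cons (hc x hx) (.cons (hc y hy).symm .nil))).trans (by simp)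

/-- A geodesic `z – y – x` with `z ≠ y` has length two, yet its end points are neighbours
of `y`, hence adjacent when `y` is simplicial. -/
theorem eq_of_dist_add_dist_eq (hconn : Γ.Connected) (hdiam : ∀ a b, Γ.dist a b ≤ 2)
    {x y z : V} (hy : Γ.IsClique (Γ.neighborSet y)) (hyx : y ≠ x)
    (h : Γ.dist z y + Γ.dist y x = Γ.dist z x) : z = y := by
  by_contra hzy
  have h1 := hconn.pos_dist_of_ne hzy
  have h2 := hconn.pos_dist_of_ne hyx
  have h3 := hdiam z x
  have hzx : z ≠ x := by rintro rfl; rw [dist_self] at h; omega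
  have hadj : Γ.Adj z x :=
    hy (dist_eq_one_iff_adj.1 (by omega : Γ.dist z y = 1)).symm
      (dist_eq_one_iff_adj.1 (by omega : Γ.dist y x = 1)) hzx
  rw [dist_eq_one_iff_adj.2 hadj] at h
  omega

theorem eq_or_eq_of_stronglyResolves (hconn : Γ.Connected) (hdiam : ∀ a b, Γ.dist a b ≤ 2)
    {x y z : V} (hx : Γ.IsClique (Γ.neighborSet x)) (hy : Γ.IsClique (Γ.neighborSet y))
    (hxy : x ≠ y) (h : Γ.StronglyResolves z x y) : z = x ∨ z = y := by
  rcases h with h | h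
  · exact Or.inr (eq_of_dist_add_dist_eq hconn hdiam hy hxy.symm h)
  · exact Or.inl (eq_of_dist_add_dist_eq hconn hdiam hx hxy h)

end SimpleGraph

section PowerGraph

variable {G : Type*} [Group G]

theorem powerGraph_adj_one {x : G} (hx : x ≠ 1) : (powerGraph G).Adj x 1 :=
  ⟨hx, Or.inr (one_mem _)⟩

theorem zpowers_eq_of_mem_zpowers {x y : G} (hx : x ≠ 1) (hy : (orderOf y).Prime)
    (h : x ∈ Subgroup.zpowers y) : Subgroup.zpowers x = Subgroup.zpowers y := by
  have : Finite (Subgroup.zpowers y) :=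
    Nat.finite_of_card_ne_zero (by rw [Nat.card_zpowers]; exact hy.ne_zero)
  have hord : orderOf x = orderOf y :=
    (hy.eq_one_or_self_of_dvd _ (orderOf_dvd_of_mem_zpowers h)).resolve_left
      (by rwa [orderOf_eq_one_iff])
  refine Subgroup.eq_of_le_of_card_ge (Subgroup.zpowers_le.2 h) ?_
  rw [Nat.card_zpowers, Nat.card_zpowers, hord]

theorem zpowers_eq_of_powerGraph_adj (hG : ∀ g : G, g ≠ 1 → (orderOf g).Prime) {x y : G}
    (hx : x ≠ 1) (hy : y ≠ 1) (h : (powerGraph G).Adj x y) :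
    Subgroup.zpowers x = Subgroup.zpowers y := by
  rcases h.2 with h | h
  · exact zpowers_eq_of_mem_zpowers hx (hG y hy) h
  · exact (zpowers_eq_of_mem_zpowers hy (hG x hx) h).symm

theorem powerGraph_isClique_neighborSet (hG : ∀ g : G, g ≠ 1 → (orderOf g).Prime) {x : G}
    (hx : x ≠ 1) :
    (powerGraph G).IsClique ((powerGraph G).neighborSet x) := by
  intro a (ha : (powerGraph G).Adj x a) b (hb : (powerGraph G).Adj x b) hab
  by_cases ha1 : a = 1
  · subst ha1; exact (powerGraph_adj_one (Ne.symm hab)).symm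
  by_cases hb1 : b = 1
  · subst hb1; exact powerGraph_adj_one hab
  have hzp : Subgroup.zpowers a = Subgroup.zpowers b :=
    (zpowers_eq_of_powerGraph_adj hG hx ha1 ha).symm.trans
      (zpowers_eq_of_powerGraph_adj hG hx hb1 hb)
  exact ⟨hab, Or.inl (hzp ▸ Subgroup.mem_zpowers a)⟩

theorem mem_or_mem_of_isStrongResolvingSet (hG : ∀ g : G, g ≠ 1 → (orderOf g).Prime)
    {S : Set G} (hS : (powerGraph G).IsStrongResolvingSet S) {x y : G} (hx : x ≠ 1)
    (hy : y ≠ 1) (hxy : x ≠ y) : x ∈ S ∨ y ∈ S := by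
  have hdom : ∀ x : G, x ≠ 1 → (powerGraph G).Adj x 1 := fun _ => powerGraph_adj_one
  obtain ⟨z, hzS, hz⟩ := hS x y hxy
  rcases SimpleGraph.eq_or_eq_of_stronglyResolves (SimpleGraph.connected_of_forall_adj 1 hdom)
    (SimpleGraph.dist_le_two_of_forall_adj 1 hdom) (powerGraph_isClique_neighborSet hG hx)
    (powerGraph_isClique_neighborSet hG hy) hxy hz with rfl | rfl
  exacts [Or.inl hzS, Or.inr hzS]

theorem isStrongResolvingSet_compl_one_pair (hG : ∀ g : G, g ≠ 1 → (orderOf g).Prime)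
    (hcyc : ¬IsCyclic G) {g : G} (hg : g ≠ 1) :
    (powerGraph G).IsStrongResolvingSet {1, g}ᶜ := by
  obtain ⟨z, hz⟩ : ∃ z, z ∉ Subgroup.zpowers g := by
    by_contra! h
    exact hcyc (isCyclic_iff_exists_zpowers_eq_top.2 ⟨g, (Subgroup.eq_top_iff' _).2 h⟩)
  have hz1 : z ≠ 1 := by rintro rfl; exact hz (one_mem _)
  have hzg : z ≠ g := by rintro rfl; exact hz (Subgroup.mem_zpowers z)
  have hnadj : ¬(powerGraph G).Adj z g := fun h =>
    hz (zpowers_eq_of_powerGraph_adj hG hz1 hg h ▸ Subgroup.mem_zpowers z)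
  exact SimpleGraph.isStrongResolvingSet_compl_pair hz1 hzg
    (SimpleGraph.stronglyResolves_of_adj_of_adj (powerGraph_adj_one hz1)
      (powerGraph_adj_one hg).symm hzg hnadj)

theorem sdim_powerGraph [Finite G] (hG : ∀ g : G, g ≠ 1 → (orderOf g).Prime)
    (hcyc : ¬IsCyclic G) : (powerGraph G).sdim = Nat.card G - 2 := by
  have : Nontrivial G := not_subsingleton_iff_nontrivial.1 fun _ => hcyc inferInstance
  obtain ⟨g, hg⟩ := exists_ne (1 : G)
  apply le_antisymm
  · calc (powerGraph G).sdim ≤ ({1, g} : Set G)ᶜ.ncard :=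
          SimpleGraph.sdim_le_ncard (isStrongResolvingSet_compl_one_pair hG hcyc hg)
      _ = Nat.card G - 2 := by rw [Set.ncard_compl, Set.ncard_pair hg.symm]
  · refine SimpleGraph.le_sdim fun S hS => ?_
    have h := Set.ncard_le_ncard_add_one_of_pairwise (T := {1}ᶜ) S.toFinite
      fun x hx y hy hxy => mem_or_mem_of_isStrongResolvingSet hG hS hx hy hxy
    rw [Set.ncard_compl, Set.ncard_singleton] at h
    omega

theorem not_isCyclic_of_forall_pow_eq_one {p : ℕ} (hp : 0 < p) (hpow : ∀ x : G, x ^ p = 1)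
    (hlt : p < Nat.card G) : ¬IsCyclic G := fun _ => by
  have hdvd : Monoid.exponent G ∣ p := Monoid.exponent_dvd_of_forall_pow_eq_one hpow
  rw [IsCyclic.exponent_eq_card] at hdvd
  exact absurd (Nat.le_of_dvd hp hdvd) (not_le.2 hlt)

end PowerGraph

theorem ZMod.pi_pow_eq_one {ι : Type*} {p : ℕ} (x : Multiplicative (ι → ZMod p)) :
    x ^ p = 1 := by
  have h0 : p • Multiplicative.toAdd x = 0 := by
    funext i
    simp
  rw [← ofAdd_toAdd (x ^ p), toAdd_pow, h0, ofAdd_zero]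

theorem stmt_12 (p : ℕ) (hp : p.Prime) (n : ℕ) (hn : 2 ≤ n) :
    ((powerGraph (Multiplicative (Fin n → ZMod p))).sdim : ℤ) =
      (p : ℤ) ^ n - 2 := by
  have : Fact p.Prime := ⟨hp⟩
  have hcard : Nat.card (Multiplicative (Fin n → ZMod p)) = p ^ n := by
    simp [Nat.card_eq_fintype_card, ZMod.card]
  have hlt : p < p ^ n := by
    simpa using Nat.pow_lt_pow_right hp.one_lt (show 1 < n by omega)
  have hcyc := not_isCyclic_of_forall_pow_eq_one hp.pos ZMod.pi_pow_eq_one (hcard ▸ hlt)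
  have horder : ∀ x : Multiplicative (Fin n → ZMod p), x ≠ 1 → (orderOf x).Prime :=
    fun x hx => (orderOf_eq_prime (ZMod.pi_pow_eq_one x) hx).symm ▸ hp
  rw [sdim_powerGraph horder hcyc, hcard, Nat.cast_sub (by linarith [hp.two_le])]
  push_cast
  ring
end

section
/- Every maximal cyclic subgroup of the generalized quaternion group Q_{4n} (n ≥ 2) is either ⟨x⟩ (of order 2n) or isomorphic to Z₄, and the intersection of any two distinct maximal cyclic subgroups of Q_{4n} has order 2. -/
/-
A cyclic subgroup is `⟨g⟩` for `g = xⁱ` or `g = xⁱy`. Every `xⁱ` lies in `⟨x⟩`, so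
the maximal cyclic subgroups are `⟨x⟩` and the subgroups `⟨xⁱy⟩ ≅ Z₄`. All of them contain the
involution `xⁿ = (xⁱy)²`. Of two distinct ones, at least one is some `⟨xⁱy⟩` of order 4, in which
the intersection is a proper subgroup containing an element of order 2, hence of order 2.
-/

namespace IsMaxCyclic

variable {G : Type*} [Group G] {M N : Subgroup G}

lemma inf_ne_right (hM : IsMaxCyclic M) (hN : IsMaxCyclic N) (hMN : M ≠ N) : M ⊓ N ≠ N :=
  fun h => hMN (hN.2 M hM.1 (h ▸ inf_le_left)).symm

end IsMaxCyclic

lemma Subgroup.card_eq_of_lt_of_card_eq_sq {G : Type*} [Group G] {H K : Subgroup G} {p : ℕ}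
    (hp : p.Prime) (hHK : H < K) (hK : Nat.card K = p ^ 2) (hpH : p ∣ Nat.card H) :
    Nat.card H = p := by
  have : Finite K := Nat.finite_of_card_ne_zero (by rw [hK]; exact pow_ne_zero 2 hp.ne_zero)
  obtain ⟨k, hk, hHk⟩ := (Nat.dvd_prime_pow hp).1 (hK ▸ card_dvd_of_le hHK.le)
  have hk_ne_two : k ≠ 2 := by
    rintro rfl
    exact hHK.ne (eq_of_le_of_card_ge hHK.le (hK ▸ hHk.ge))
  have hk_ne_zero : k ≠ 0 := by
    rintro rfl
    rw [hHk, pow_zero] at hpH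
    exact hp.one_lt.ne' (Nat.dvd_one.1 hpH)
  obtain rfl : k = 1 := by omega
  simpa using hHk

namespace QuaternionGroup

open Subgroup

variable {n : ℕ} [NeZero n]

lemma a_mem_zpowers_a_one (i : ZMod (2 * n)) : a i ∈ zpowers (a 1 : QuaternionGroup n) :=
  ⟨i.val, by simp only [zpow_natCast, a_one_pow, ZMod.natCast_zmod_val]⟩

lemma card_zpowers_xa (i : ZMod (2 * n)) : Nat.card (zpowers (xa i)) = 4 := by
  rw [Nat.card_zpowers, orderOf_xa]

lemma orderOf_a_n : orderOf (a n : QuaternionGroup n) = 2 := by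
  rw [← xa_sq 0, orderOf_pow_of_dvd two_ne_zero (by rw [orderOf_xa]; norm_num), orderOf_xa]

lemma eq_zpowers_a_one_or_xa_of_isMaxCyclic {M : Subgroup (QuaternionGroup n)}
    (hM : IsMaxCyclic M) : M = zpowers (a 1) ∨ ∃ i, M = zpowers (xa i) := by
  obtain ⟨g, rfl⟩ := (Subgroup.isCyclic_iff_exists_zpowers_eq_top M).1 hM.1
  cases g with
  | a i => exact Or.inl (hM.2 _ inferInstance (zpowers_le.2 (a_mem_zpowers_a_one i)))
  | xa i => exact Or.inr ⟨i, rfl⟩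

lemma a_n_mem_of_isMaxCyclic {M : Subgroup (QuaternionGroup n)} (hM : IsMaxCyclic M) :
    a n ∈ M := by
  obtain rfl | ⟨i, rfl⟩ := eq_zpowers_a_one_or_xa_of_isMaxCyclic hM
  · exact a_mem_zpowers_a_one _
  · exact ⟨2, by simp only [zpow_ofNat, xa_sq]⟩

lemma card_inf_eq_two_of_isMaxCyclic {M N : Subgroup (QuaternionGroup n)}
    (hM : IsMaxCyclic M) (hN : IsMaxCyclic N) (hMN : M ≠ N) (hN4 : Nat.card N = 2 ^ 2) :
    Nat.card ↥(M ⊓ N) = 2 := by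
  refine card_eq_of_lt_of_card_eq_sq Nat.prime_two
    (lt_of_le_of_ne inf_le_right (hM.inf_ne_right hN hMN)) hN4 ?_
  rw [← orderOf_a_n (n := n)]
  exact orderOf_dvd_natCard _ ⟨a_n_mem_of_isMaxCyclic hM, a_n_mem_of_isMaxCyclic hN⟩

end QuaternionGroup

open QuaternionGroup in
theorem stmt_15 (n : ℕ) (hn : 2 ≤ n) :
    (∀ M : Subgroup (QuaternionGroup n), IsMaxCyclic M →
      M = Subgroup.zpowers (QuaternionGroup.a 1) ∨
        Nonempty (↥M ≃* Multiplicative (ZMod 4))) ∧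
    Nat.card ↥(Subgroup.zpowers (QuaternionGroup.a (1 : ZMod (2 * n)))) = 2 * n ∧
    (∀ M N : Subgroup (QuaternionGroup n), IsMaxCyclic M → IsMaxCyclic N → M ≠ N →
      Nat.card ↥(M ⊓ N) = 2) := by
  have : NeZero n := ⟨by omega⟩
  refine ⟨fun M hM => ?_, by rw [Nat.card_zpowers, orderOf_a_one], fun M N hM hN hMN => ?_⟩
  · obtain h | ⟨i, rfl⟩ := eq_zpowers_a_one_or_xa_of_isMaxCyclic hM
    · exact Or.inl h
    · exact Or.inr ⟨mulEquivOfCyclicCardEq ((card_zpowers_xa i).trans (by simp))⟩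
  · obtain hMa | ⟨i, rfl⟩ := eq_zpowers_a_one_or_xa_of_isMaxCyclic hM
    · obtain hNa | ⟨j, rfl⟩ := eq_zpowers_a_one_or_xa_of_isMaxCyclic hN
      · exact absurd (hMa.trans hNa.symm) hMN
      · exact card_inf_eq_two_of_isMaxCyclic hM hN hMN (card_zpowers_xa j)
    · rw [inf_comm]
      exact card_inf_eq_two_of_isMaxCyclic hN hM hMN.symm (card_zpowers_xa i)
end
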